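/- Let φ : [a,b] → ℝ be C² with |φ″(t)| ≥ ρ > 0 for all t ∈ [a,b], and let η : [a,b] → ℂ satisfy |η(t)| ≤ 1 and ∫ₐᵇ |η′(t)| dt ≤ M. Then |∫ₐᵇ η(t) e^{iμφ(t)} dt| ≤ C(1 + M)(μρ)^{−1/2} for all μ > 0, where C is an absolute constant. -/

import Mathlib

/-!
If `ψ'` is monotone and `|ψ'| ≥ λ`, then `e^{iψ} = (iψ')⁻¹ (e^{iψ})'`, and one integration by
parts bounds `∫ e^{iψ}` by `4/λ`, since `1/ψ'` is monotone with values of size at most `1/λ`.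
If `ψ'' ≥ r`, then `|ψ'(t)| ≥ r |t - c|` for a suitable point `c`; the window `|t - c| < δ` with
`δ = r^{-1/2}` contributes at most `2δ`, and the first bound with `λ = rδ` controls the rest, giving
`10 r^{-1/2}`. By Darboux's theorem `ψ''` has constant sign, and `ψ'' ≤ -r` reduces to `ψ'' ≥ r`
by complex conjugation. Finally the amplitude is removed by integrating by parts against the
primitive `F(x) = ∫ₐˣ e^{iψ}`: `|∫ η F'| ≤ (|η(b)| + ∫ |η'|) · sup |F|`.
-/

open Real Complex intervalIntegral Set
open MeasureTheory ComplexConjugate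

section

variable {E : Type*} [NormedAddCommGroup E] [NormedSpace ℝ E] {f : ℝ → E} {a b t : ℝ}

theorem DifferentiableOn.hasDerivAt_derivWithin_Icc (hf : DifferentiableOn ℝ f (Icc a b))
    (ht : t ∈ Ioo a b) : HasDerivAt f (derivWithin f (Icc a b) t) t := by
  rw [derivWithin_of_mem_nhds (Icc_mem_nhds ht.1 ht.2)]
  exact (hf.differentiableAt (Icc_mem_nhds ht.1 ht.2)).hasDerivAt

theorem ContDiffOn.derivWithin_Icc_hasDerivAt (hf : ContDiffOn ℝ 2 f (Icc a b))
    (ht : t ∈ Ioo a b) : HasDerivAt (derivWithin f (Icc a b)) (deriv (deriv f) t) t := by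
  have hf' : ContDiffOn ℝ 1 (deriv f) (Ioo a b) :=
    (hf.mono Ioo_subset_Icc_self).deriv_of_isOpen isOpen_Ioo (by norm_num)
  refine ((hf'.differentiableOn one_ne_zero).differentiableAt (Ioo_mem_nhds ht.1 ht.2)).hasDerivAt
    |>.congr_of_eventuallyEq ?_
  filter_upwards [Ioo_mem_nhds ht.1 ht.2] with s hs
  exact derivWithin_of_mem_nhds (Icc_mem_nhds hs.1 hs.2)

theorem ContDiffOn.intervalIntegrable_deriv (hf : ContDiffOn ℝ 1 f (Icc a b)) (hab : a < b) :
    IntervalIntegrable (deriv f) volume a b := by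
  rw [intervalIntegrable_iff_integrableOn_Ioo_of_le hab.le]
  refine ((hf.continuousOn_derivWithin (uniqueDiffOn_Icc hab) le_rfl).integrableOn_Icc.mono_set
    Ioo_subset_Icc_self).congr_fun (fun s hs => ?_) measurableSet_Ioo
  exact derivWithin_of_mem_nhds (Icc_mem_nhds hs.1 hs.2)

theorem norm_integral_le_add_add_of_continuousOn {p q : ℝ} (hap : a ≤ p) (hpq : p ≤ q)
    (hqb : q ≤ b) (hf : ContinuousOn f (Icc a b)) :
    ‖∫ x in a..b, f x‖ ≤ ‖∫ x in a..p, f x‖ + ‖∫ x in p..q, f x‖ + ‖∫ x in q..b, f x‖ := by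
  have hint : ∀ s t, a ≤ s → s ≤ t → t ≤ b → IntervalIntegrable f volume s t :=
    fun s t has hst htb => (hf.mono (Icc_subset_Icc has htb)).intervalIntegrable_of_Icc hst
  rw [← integral_add_adjacent_intervals (hint a q le_rfl (hpq.trans' hap) hqb)
      (hint q b (hpq.trans' hap) hqb le_rfl),
    ← integral_add_adjacent_intervals (hint a p le_rfl hap (hpq.trans hqb)) (hint p q hap hpq hqb)]
  exact (norm_add_le _ _).trans (by gcongr; exact norm_add_le _ _)

end

theorem intervalIntegrable_deriv_of_nonneg_of_le {k k' : ℝ → ℝ} {u v : ℝ} (huv : u ≤ v)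
    (hk : ContinuousOn k (Icc u v)) (hk' : ∀ t ∈ Ioo u v, HasDerivAt k (k' t) t)
    (hk'_nonneg : ∀ t ∈ Ioo u v, 0 ≤ k' t) : IntervalIntegrable k' volume u v :=
  (intervalIntegrable_iff_integrableOn_Ioc_of_le huv).2
    (integrableOn_deriv_of_nonneg hk hk' hk'_nonneg)

theorem norm_integral_deriv_mul_le_sub {k k' : ℝ → ℝ} {f : ℝ → ℂ} {u v : ℝ} (huv : u ≤ v)
    (hk : ContinuousOn k (Icc u v)) (hk' : ∀ t ∈ Ioo u v, HasDerivAt k (k' t) t)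
    (hk'_nonneg : ∀ t ∈ Ioo u v, 0 ≤ k' t) (hf : ∀ t, ‖f t‖ ≤ 1) :
    ‖∫ t in u..v, k' t * f t‖ ≤ k v - k u := by
  have hk'_int := intervalIntegrable_deriv_of_nonneg_of_le huv hk hk' hk'_nonneg
  rw [← integral_eq_sub_of_hasDerivAt_of_le huv hk hk' hk'_int]
  refine norm_integral_le_of_norm_le huv ?_ hk'_int
  filter_upwards [Measure.ae_ne volume v] with t htv ht
  rw [norm_mul, norm_real, norm_of_nonneg (hk'_nonneg t ⟨ht.1, ht.2.lt_of_ne htv⟩)]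
  exact mul_le_of_le_one_right (hk'_nonneg t ⟨ht.1, ht.2.lt_of_ne htv⟩) (hf t)

theorem norm_integral_cexp_le_of_le_abs_deriv {ψ g g' : ℝ → ℝ} {u v lam : ℝ} (huv : u ≤ v)
    (hlam : 0 < lam) (hψ : ContinuousOn ψ (Icc u v))
    (hψ' : ∀ t ∈ Ioo u v, HasDerivAt ψ (g t) t) (hg : ContinuousOn g (Icc u v))
    (hg' : ∀ t ∈ Ioo u v, HasDerivAt g (g' t) t) (hg'_nonneg : ∀ t ∈ Ioo u v, 0 ≤ g' t)
    (hlam_le : ∀ t ∈ Icc u v, lam ≤ |g t|) :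
    ‖∫ t in u..v, cexp (I * ψ t)‖ ≤ 4 / lam := by
  have hg0 : ∀ t ∈ Icc u v, g t ≠ 0 := fun t ht => abs_pos.1 (hlam.trans_le (hlam_le t ht))
  set k : ℝ → ℝ := fun t => -(g t)⁻¹
  set k' : ℝ → ℝ := fun t => g' t / g t ^ 2
  have hk : ContinuousOn k (Icc u v) := (hg.inv₀ hg0).neg
  have hk' : ∀ t ∈ Ioo u v, HasDerivAt k (k' t) t := fun t ht => by
    have := ((hg' t ht).inv (hg0 t (Ioo_subset_Icc_self ht))).neg
    rwa [neg_div, neg_neg] at this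
  have hk'_nonneg : ∀ t ∈ Ioo u v, 0 ≤ k' t := fun t ht =>
    div_nonneg (hg'_nonneg t ht) (sq_nonneg (g t))
  have hk_abs : ∀ t ∈ Icc u v, |k t| ≤ 1 / lam := fun t ht => by
    simpa [k] using inv_anti₀ hlam (hlam_le t ht)
  set E : ℝ → ℂ := fun t => cexp (I * ψ t)
  have hE_norm : ∀ t, ‖I * E t‖ = 1 := fun t => by simp [E, norm_exp_I_mul_ofReal]
  have hE' : ∀ t ∈ Ioo u v, HasDerivAt E (I * g t * E t) t := fun t ht => by
    convert (((hψ' t ht).ofReal_comp).const_mul I).cexp using 1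
    ring
  -- `E = k · (I E)'`, so integration by parts moves the derivative onto `k = -1/g`.
  have hE_eq : ∀ t ∈ uIcc u v, E t = k t * (I * (I * g t * E t)) := fun t ht => by
    have : (g t : ℂ) ≠ 0 := ofReal_ne_zero.2 (hg0 t (uIcc_of_le huv ▸ ht))
    rw [← mul_assoc I, ← mul_assoc I, I_mul_I]
    simp only [k]; push_cast; field_simp
  have hk'_int := intervalIntegrable_deriv_of_nonneg_of_le huv hk hk' hk'_nonneg
  have ibp := integral_mul_deriv_eq_deriv_mul_of_hasDerivAt (a := u) (b := v)
    (u := fun t => (k t : ℂ)) (u' := fun t => k' t) (v := fun t => I * E t)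
    (by rw [uIcc_of_le huv]; fun_prop) (by rw [uIcc_of_le huv]; fun_prop)
    (by simpa [huv] using fun t ht => (hk' t ht).ofReal_comp)
    (by simpa [huv] using fun t ht => (hE' t ht).const_mul I)
    ⟨hk'_int.1.ofReal, hk'_int.2.ofReal⟩
    (ContinuousOn.intervalIntegrable (by rw [uIcc_of_le huv]; fun_prop))
  rw [integral_congr hE_eq, ibp]
  have hu := left_mem_Icc.2 huv
  have hv := right_mem_Icc.2 huv
  calc _ ≤ |k v| + |k u| + (k v - k u) := by
        refine (norm_sub_le _ _).trans (add_le_add ((norm_sub_le _ _).trans_eq ?_)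
          (norm_integral_deriv_mul_le_sub huv hk hk' hk'_nonneg fun t => (hE_norm t).le))
        simp only [norm_mul, hE_norm, norm_real, norm_eq_abs, mul_one]
    _ ≤ 4 / lam := by
        have : 4 / lam = 4 * (1 / lam) := by ring
        linarith [hk_abs v hv, hk_abs u hu, (abs_le.1 (hk_abs v hv)).2, (abs_le.1 (hk_abs u hu)).1]

theorem exists_mul_abs_sub_le_abs_of_le_deriv {g g' : ℝ → ℝ} {u v r : ℝ} (huv : u ≤ v)
    (hg : ContinuousOn g (Icc u v)) (hg' : ∀ t ∈ Ioo u v, HasDerivAt g (g' t) t)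
    (hr : ∀ t ∈ Ioo u v, r ≤ g' t) :
    ∃ c ∈ Icc u v, ∀ x ∈ Icc u v, r * |x - c| ≤ |g x| := by
  have hgrowth : ∀ s ∈ Icc u v, ∀ t ∈ Icc u v, s ≤ t → r * (t - s) ≤ g t - g s := by
    refine (convex_Icc u v).mul_sub_le_image_sub_of_le_deriv hg ?_ ?_ <;> rw [interior_Icc]
    · exact fun t ht => (hg' t ht).differentiableAt.differentiableWithinAt
    · exact fun t ht => (hg' t ht).deriv ▸ hr t ht
  obtain ⟨c, hc, hgc_left, hgc_right⟩ : ∃ c ∈ Icc u v, (u < c → g c ≤ 0) ∧ (c < v → 0 ≤ g c) := by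
    by_cases hu : 0 ≤ g u
    · exact ⟨u, left_mem_Icc.2 huv, fun h => absurd h (lt_irrefl u), fun _ => hu⟩
    by_cases hv : g v ≤ 0
    · exact ⟨v, right_mem_Icc.2 huv, fun _ => hv, fun h => absurd h (lt_irrefl v)⟩
    obtain ⟨c, hc, hgc⟩ := intermediate_value_Icc huv hg ⟨(not_le.1 hu).le, (not_le.1 hv).le⟩
    exact ⟨c, hc, fun _ => hgc.le, fun _ => hgc.ge⟩
  refine ⟨c, hc, fun x hx => ?_⟩
  rcases lt_trichotomy x c with hxc | rfl | hcx
  · have := hgrowth x hx c hc hxc.le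
    have := hgc_left (hx.1.trans_lt hxc)
    rw [abs_of_neg (sub_neg.2 hxc)]
    linarith [neg_abs_le (g x)]
  · simp
  · have := hgrowth c hc x hx hcx.le
    have := hgc_right (hcx.trans_le hx.2)
    rw [abs_of_pos (sub_pos.2 hcx)]
    linarith [le_abs_self (g x)]

theorem norm_integral_cexp_le_of_le_deriv2 {ψ g g' : ℝ → ℝ} {u v r : ℝ} (huv : u ≤ v)
    (hr : 0 < r) (hψ : ContinuousOn ψ (Icc u v))
    (hψ' : ∀ t ∈ Ioo u v, HasDerivAt ψ (g t) t) (hg : ContinuousOn g (Icc u v))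
    (hg' : ∀ t ∈ Ioo u v, HasDerivAt g (g' t) t) (hr_le : ∀ t ∈ Ioo u v, r ≤ g' t) :
    ‖∫ t in u..v, cexp (I * ψ t)‖ ≤ 10 / √r := by
  obtain ⟨c, hc, hgc⟩ := exists_mul_abs_sub_le_abs_of_le_deriv huv hg hg' hr_le
  have hsr : 0 < √r := sqrt_pos.2 hr
  set δ := 1 / √r
  have hδ : 0 < δ := by positivity
  have hfar : ∀ s t, u ≤ s → s ≤ t → t ≤ v → (∀ x ∈ Icc s t, δ ≤ |x - c|) →
      ‖∫ x in s..t, cexp (I * ψ x)‖ ≤ 4 / √r := fun s t hus hst htv hsep =>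
    norm_integral_cexp_le_of_le_abs_deriv hst hsr (hψ.mono (Icc_subset_Icc hus htv))
      (fun x hx => hψ' x (Ioo_subset_Ioo hus htv hx)) (hg.mono (Icc_subset_Icc hus htv))
      (fun x hx => hg' x (Ioo_subset_Ioo hus htv hx))
      (fun x hx => hr.le.trans (hr_le x (Ioo_subset_Ioo hus htv hx))) fun x hx' => calc
        √r = r * δ := by rw [mul_one_div, div_sqrt]
        _ ≤ r * |x - c| := by gcongr; exact hsep x hx'
        _ ≤ |g x| := hgc x ⟨hus.trans hx'.1, hx'.2.trans htv⟩
  set p := max u (c - δ)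
  set q := min v (c + δ)
  have hup : u ≤ p := le_max_left _ _
  have hpq : p ≤ q :=
    max_le (le_min huv (by linarith [hc.1])) (le_min (by linarith [hc.2]) (by linarith))
  have hqv : q ≤ v := min_le_left _ _
  have hleft : ‖∫ x in u..p, cexp (I * ψ x)‖ ≤ 4 / √r := by
    rcases hup.eq_or_lt with h | h
    · rw [← h, integral_same, norm_zero]; positivity
    have hp : p = c - δ := max_eq_right (lt_max_iff.1 h |>.resolve_left (lt_irrefl u)).le
    refine hfar u p le_rfl hup (hpq.trans hqv) fun x hx => ?_
    rw [abs_sub_comm]; exact le_abs.2 (Or.inl (by linarith [hx.2]))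
  have hright : ‖∫ x in q..v, cexp (I * ψ x)‖ ≤ 4 / √r := by
    rcases hqv.eq_or_lt with h | h
    · rw [h, integral_same, norm_zero]; positivity
    have hq : q = c + δ := min_eq_right (min_lt_iff.1 h |>.resolve_left (lt_irrefl v)).le
    refine hfar q v (hup.trans hpq) hqv le_rfl fun x hx => ?_
    exact le_abs.2 (Or.inl (by linarith [hx.1]))
  have hmiddle : ‖∫ x in p..q, cexp (I * ψ x)‖ ≤ 2 / √r := by
    refine (norm_integral_le_of_norm_le_const fun x _ => (norm_exp_I_mul_ofReal (ψ x)).le).trans ?_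
    rw [one_mul, abs_of_nonneg (sub_nonneg.2 hpq)]
    have : 2 / √r = 2 * δ := by ring
    linarith [min_le_right v (c + δ), le_max_right u (c - δ)]
  calc _ ≤ ‖∫ x in u..p, cexp (I * ψ x)‖ + ‖∫ x in p..q, cexp (I * ψ x)‖
          + ‖∫ x in q..v, cexp (I * ψ x)‖ :=
        norm_integral_le_add_add_of_continuousOn hup hpq hqv (by fun_prop)
    _ ≤ 4 / √r + 2 / √r + 4 / √r := by gcongr
    _ = 10 / √r := by ring

theorem norm_integral_cexp_le_of_le_abs_deriv2 {ψ g g' : ℝ → ℝ} {u v r : ℝ} (huv : u ≤ v)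
    (hr : 0 < r) (hψ : ContinuousOn ψ (Icc u v))
    (hψ' : ∀ t ∈ Ioo u v, HasDerivAt ψ (g t) t) (hg : ContinuousOn g (Icc u v))
    (hg' : ∀ t ∈ Ioo u v, HasDerivAt g (g' t) t) (hr_le : ∀ t ∈ Ioo u v, r ≤ |g' t|) :
    ‖∫ t in u..v, cexp (I * ψ t)‖ ≤ 10 / √r := by
  rcases hasDerivWithinAt_forall_lt_or_forall_gt_of_forall_ne (convex_Ioo u v)
    (fun t ht => (hg' t ht).hasDerivWithinAt) (m := 0)
    (fun t ht => abs_pos.1 (hr.trans_le (hr_le t ht))) with hneg | hpos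
  · -- Complex conjugation turns the phase `ψ` into `-ψ`, whose second derivative is positive.
    have hconj : ∫ t in u..v, cexp (I * ↑(-ψ t)) = conj (∫ t in u..v, cexp (I * ψ t)) := by
      rw [← intervalIntegral_conj]
      refine integral_congr fun t _ => ?_
      rw [← exp_conj, map_mul, conj_I, conj_ofReal, ofReal_neg, neg_mul, mul_neg]
    have := norm_integral_cexp_le_of_le_deriv2 (ψ := fun t => -ψ t) (g := fun t => -g t)
      (g' := fun t => -g' t) huv hr hψ.neg (fun t ht => (hψ' t ht).neg)
      hg.neg (fun t ht => (hg' t ht).neg)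
      fun t ht => (hr_le t ht).trans_eq (abs_of_neg (hneg t ht))
    rwa [hconj, RCLike.norm_conj] at this
  · exact norm_integral_cexp_le_of_le_deriv2 huv hr hψ hψ' hg hg'
      fun t ht => (hr_le t ht).trans_eq (abs_of_pos (hpos t ht))

theorem norm_integral_mul_le_of_norm_primitive_le {η η' f : ℝ → ℂ} {u v K : ℝ} (huv : u ≤ v)
    (hη : ContinuousOn η (Icc u v)) (hη' : ∀ t ∈ Ioo u v, HasDerivAt η (η' t) t)
    (hη'_int : IntervalIntegrable η' volume u v) (hf : ContinuousOn f (Icc u v))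
    (hK : ∀ x ∈ Icc u v, ‖∫ t in u..x, f t‖ ≤ K) :
    ‖∫ t in u..v, η t * f t‖ ≤ (‖η v‖ + ∫ t in u..v, ‖η' t‖) * K := by
  set F := fun x => ∫ t in u..x, f t
  have hF : ContinuousOn F (Icc u v) := by
    simpa [uIcc_of_le huv] using
      continuousOn_primitive_interval (hf.integrableOn_Icc.mono_set (uIcc_of_le huv).subset)
  have hF' : ∀ x ∈ Ioo u v, HasDerivAt F (f x) x := fun x hx =>
    integral_hasDerivAt_right
      ((hf.mono (Icc_subset_Icc le_rfl hx.2.le)).intervalIntegrable_of_Icc hx.1.le)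
      ((hf.mono Ioo_subset_Icc_self).stronglyMeasurableAtFilter isOpen_Ioo x hx)
      ((hf.mono Ioo_subset_Icc_self).continuousAt (Ioo_mem_nhds hx.1 hx.2))
  have ibp := integral_mul_deriv_eq_deriv_mul_of_hasDerivAt (a := u) (b := v) (u := η) (v := F)
    (by rwa [uIcc_of_le huv]) (by rwa [uIcc_of_le huv]) (by simpa [huv] using hη')
    (by simpa [huv] using hF') hη'_int (hf.intervalIntegrable_of_Icc huv)
  have hrem : ‖∫ t in u..v, η' t * F t‖ ≤ (∫ t in u..v, ‖η' t‖) * K := by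
    rw [← intervalIntegral.integral_mul_const]
    refine norm_integral_le_of_norm_le huv (ae_of_all _ fun t ht => ?_) (hη'_int.norm.mul_const K)
    rw [norm_mul]
    exact mul_le_mul_of_nonneg_left (hK t (Ioc_subset_Icc_self ht)) (norm_nonneg _)
  have hFu : F u = 0 := integral_same
  rw [ibp, hFu, mul_zero, sub_zero]
  calc _ ≤ ‖η v‖ * ‖F v‖ + ‖∫ t in u..v, η' t * F t‖ :=
        (norm_sub_le _ _).trans_eq (by rw [norm_mul])
    _ ≤ ‖η v‖ * K + (∫ t in u..v, ‖η' t‖) * K := by gcongr; exact hK v (right_mem_Icc.2 huv)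
    _ = _ := by ring

theorem norm_integral_mul_cexp_le_of_le_abs_deriv2 {ψ g g' : ℝ → ℝ} {η η' : ℝ → ℂ}
    {u v r : ℝ} (huv : u ≤ v) (hr : 0 < r) (hψ : ContinuousOn ψ (Icc u v))
    (hψ' : ∀ t ∈ Ioo u v, HasDerivAt ψ (g t) t) (hg : ContinuousOn g (Icc u v))
    (hg' : ∀ t ∈ Ioo u v, HasDerivAt g (g' t) t) (hr_le : ∀ t ∈ Ioo u v, r ≤ |g' t|)
    (hη : ContinuousOn η (Icc u v)) (hη' : ∀ t ∈ Ioo u v, HasDerivAt η (η' t) t)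
    (hη'_int : IntervalIntegrable η' volume u v) :
    ‖∫ t in u..v, η t * cexp (I * ψ t)‖ ≤ (‖η v‖ + ∫ t in u..v, ‖η' t‖) * (10 / √r) :=
  norm_integral_mul_le_of_norm_primitive_le huv hη hη' hη'_int (by fun_prop) fun x hx =>
    norm_integral_cexp_le_of_le_abs_deriv2 hx.1 hr (hψ.mono (Icc_subset_Icc_right hx.2))
      (fun t ht => hψ' t (Ioo_subset_Ioo_right hx.2 ht)) (hg.mono (Icc_subset_Icc_right hx.2))
      (fun t ht => hg' t (Ioo_subset_Ioo_right hx.2 ht))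
      (fun t ht => hr_le t (Ioo_subset_Ioo_right hx.2 ht))

/-- (Second-derivative van der Corput lemma with amplitude.)
If `φ : [a,b] → ℝ` is `C²` with `|φ″| ≥ ρ > 0` on `[a,b]` and `η : [a,b] → ℂ`
satisfies `|η| ≤ 1` and `∫ₐᵇ |η′| ≤ M`, then
`|∫ₐᵇ η(t) e^{iμφ(t)} dt| ≤ C (1 + M) (μρ)^{−1/2}` for all `μ > 0`,
with `C` an absolute constant. -/
theorem vanDerCorput_second_order :
    ∃ C : ℝ, 0 < C ∧
      ∀ (a b ρ M : ℝ) (φ : ℝ → ℝ) (η : ℝ → ℂ),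
        a < b → 0 < ρ → 0 ≤ M →
        ContDiffOn ℝ 2 φ (Set.Icc a b) →
        (∀ t ∈ Set.Icc a b, ρ ≤ |deriv (deriv φ) t|) →
        ContDiffOn ℝ 1 η (Set.Icc a b) →
        (∀ t ∈ Set.Icc a b, ‖η t‖ ≤ 1) →
        (∫ t in a..b, ‖deriv η t‖) ≤ M →
        ∀ μ : ℝ, 0 < μ →
          ‖∫ t in a..b, η t * Complex.exp (Complex.I * (μ * φ t))‖
            ≤ C * (1 + M) * (μ * ρ) ^ (-(1/2) : ℝ) := by
  refine ⟨10, by norm_num, fun a b ρ M φ η hab hρ _ hφ hφ'' hη hη1 hη'M μ hμ => ?_⟩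
  -- `deriv φ` may be junk at `a` and `b`; its one-sided version is continuous on `[a, b]`.
  have key := norm_integral_mul_cexp_le_of_le_abs_deriv2 (ψ := fun t => μ * φ t)
    (g := fun t => μ * derivWithin φ (Icc a b) t) (g' := fun t => μ * deriv (deriv φ) t)
    hab.le (mul_pos hμ hρ) (hφ.continuousOn.const_smul μ)
    (fun t ht => ((hφ.differentiableOn (by norm_num)).hasDerivAt_derivWithin_Icc ht).const_mul μ)
    ((hφ.continuousOn_derivWithin (uniqueDiffOn_Icc hab) (by norm_num)).const_smul μ)
    (fun t ht => (hφ.derivWithin_Icc_hasDerivAt ht).const_mul μ)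
    (fun t ht => by
      rw [abs_mul, abs_of_pos hμ]
      exact mul_le_mul_of_nonneg_left (hφ'' t (Ioo_subset_Icc_self ht)) hμ.le)
    hη.continuousOn
    (fun t ht => (hη.differentiableOn one_ne_zero).hasDerivAt (Icc_mem_nhds ht.1 ht.2))
    (hη.intervalIntegrable_deriv hab)
  push_cast at key
  calc _ ≤ (‖η b‖ + ∫ t in a..b, ‖deriv η t‖) * (10 / √(μ * ρ)) := key
    _ ≤ (1 + M) * (10 / √(μ * ρ)) := by gcongr; exact hη1 b (right_mem_Icc.2 hab.le)
    _ = 10 * (1 + M) * (μ * ρ) ^ (-(1/2) : ℝ) := by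
        rw [rpow_neg (by positivity), ← sqrt_eq_rpow]; ring
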